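/- Assume k² + λ₁λ₂ ≠ 0 and k² − λ₁λ₂ ≠ 0, and let δ ≥ 0. Then the eigenvalues of the Schwarz iteration matrix R_δ = M_δ⁻¹ N_δ N_0⁻¹ M_0 are exactly the two complex numbers r₊ and r₋ given by r± = X²/2 + e^{−δ(λ₁+λ₂)} ± (1/2)√(X²(X² + 4e^{−δ(λ₁+λ₂)})), where X = ((k² + λ₁λ₂)/(k² − λ₁λ₂))(e^{−λ₁δ} − e^{−λ₂δ}); that is, r₊ and r₋ are the roots of the characteristic polynomial of R_δ. -/

import Mathlib

open Complex Matrix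

/-- The matrix `M_x` whose columns are the two bounded-at `-∞` exponential solutions. -/
noncomputable def Mmat (l1 l2 : ℂ) (k : ℝ) (x : ℝ) : Matrix (Fin 2) (Fin 2) ℂ :=
  !![Complex.exp (l1 * x), -(Complex.I * l2 / (k : ℂ)) * Complex.exp (l2 * x);
     (Complex.I * l1 / (k : ℂ)) * Complex.exp (l1 * x), Complex.exp (l2 * x)]

/-- The matrix `N_x` whose columns are the two bounded-at `+∞` exponential solutions. -/
noncomputable def Nmat (l1 l2 : ℂ) (k : ℝ) (x : ℝ) : Matrix (Fin 2) (Fin 2) ℂ :=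
  !![Complex.exp (-l1 * x), (Complex.I * l2 / (k : ℂ)) * Complex.exp (-l2 * x);
     -(Complex.I * l1 / (k : ℂ)) * Complex.exp (-l1 * x), Complex.exp (-l2 * x)]

/-!
Both `M_x` and `N_x` are `M_0` and `N_0` times a diagonal matrix of exponentials, so
`R_δ = D G D G⁻¹` with `D = diag(p, q) = diag(e^{-λ₁δ}, e^{-λ₂δ})` and `G = M_0⁻¹ N_0`.
Since `N_0 M_0 = (1 - λ₁λ₂/k²) • 1`, the matrix `G` is explicit: it has determinant `1` and
both diagonal entries equal to `(k² + λ₁λ₂)/(k² - λ₁λ₂)`. For any invertible 2×2 matrix `G`,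
`tr (D G D G⁻¹) = (G₀₀ G₁₁ / det G) (p - q)² + 2pq` and `det (D G D G⁻¹) = (pq)²`, so
`tr R_δ = X² + 2e^{-δ(λ₁+λ₂)}` and `det R_δ = e^{-2δ(λ₁+λ₂)}`; these are the sum and product
of `r±`, which are therefore the roots of the characteristic polynomial of `R_δ`.
-/

namespace Matrix

variable {K : Type*} [Field K]

open Polynomial in
theorem charpoly_fin_two_of_trace_of_det {A : Matrix (Fin 2) (Fin 2) K} {a b : K}
    (htr : A.trace = a + b) (hdet : A.det = a * b) :
    A.charpoly = (X - C a) * (X - C b) := by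
  rw [charpoly_fin_two, htr, hdet]
  simp only [map_add, map_mul]
  ring

theorem spectrum_fin_two_of_trace_of_det {A : Matrix (Fin 2) (Fin 2) K} {a b : K}
    (htr : A.trace = a + b) (hdet : A.det = a * b) :
    spectrum K A = {a, b} := by
  ext r
  simp [mem_spectrum_iff_isRoot_charpoly, charpoly_fin_two_of_trace_of_det htr hdet,
    sub_eq_zero, eq_comm]

theorem trace_diagonal_mul_mul_diagonal_mul_inv (G : Matrix (Fin 2) (Fin 2) K)
    (hG : G.det ≠ 0) (p q : K) :
    (diagonal ![p, q] * G * diagonal ![p, q] * G⁻¹).trace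
      = G 0 0 * G 1 1 / G.det * (p - q) ^ 2 + 2 * (p * q) := by
  rw [inv_def, adjugate_fin_two, Ring.inverse_eq_inv', trace_fin_two]
  simp [mul_apply, Fin.sum_univ_two]
  rw [det_fin_two] at hG ⊢
  field_simp
  ring

theorem det_diagonal_mul_mul_diagonal_mul_inv (G : Matrix (Fin 2) (Fin 2) K)
    (hG : G.det ≠ 0) (p q : K) :
    (diagonal ![p, q] * G * diagonal ![p, q] * G⁻¹).det = (p * q) ^ 2 := by
  simp only [det_mul, det_diagonal, Fin.prod_univ_two, det_nonsing_inv, Ring.inverse_eq_inv']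
  field_simp
  simp

end Matrix

noncomputable def schwarzIteration (l1 l2 : ℂ) (k δ : ℝ) : Matrix (Fin 2) (Fin 2) ℂ :=
  (Mmat l1 l2 k δ)⁻¹ * Nmat l1 l2 k δ * (Nmat l1 l2 k 0)⁻¹ * Mmat l1 l2 k 0

section Schwarz

variable (l1 l2 : ℂ) (k : ℝ)

theorem Mmat_eq_mul_diagonal (x : ℝ) :
    Mmat l1 l2 k x = Mmat l1 l2 k 0 * diagonal ![exp (l1 * x), exp (l2 * x)] := by
  ext i j; fin_cases i <;> fin_cases j <;> simp [Mmat]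

theorem Nmat_eq_mul_diagonal (x : ℝ) :
    Nmat l1 l2 k x = Nmat l1 l2 k 0 * diagonal ![exp (-l1 * x), exp (-l2 * x)] := by
  ext i j; fin_cases i <;> fin_cases j <;> simp [Nmat]

theorem inv_diagonal_exp (a b : ℂ) :
    (diagonal ![exp a, exp b])⁻¹ = diagonal ![exp (-a), exp (-b)] := by
  refine inv_eq_left_inv ?_
  rw [diagonal_mul_diagonal, ← diagonal_one]
  congr 1
  ext i; fin_cases i <;> simp [← exp_add]

theorem Nmat_zero_mul_Mmat_zero :
    Nmat l1 l2 k 0 * Mmat l1 l2 k 0 = (1 - l1 * l2 / k ^ 2) • 1 := by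
  ext i j
  fin_cases i <;> fin_cases j <;>
    simp [Nmat, Mmat, mul_apply, Fin.sum_univ_two] <;> ring_nf <;> simp only [I_sq] <;> ring

variable {l1 l2 k} (h : 1 - l1 * l2 / k ^ 2 ≠ 0)
include h

theorem inv_smul_Nmat_zero_mul_Mmat_zero :
    ((1 - l1 * l2 / k ^ 2)⁻¹ • Nmat l1 l2 k 0) * Mmat l1 l2 k 0 = 1 := by
  rw [smul_mul_assoc, Nmat_zero_mul_Mmat_zero, smul_smul, inv_mul_cancel₀ h, one_smul]

theorem inv_Mmat_zero : (Mmat l1 l2 k 0)⁻¹ = (1 - l1 * l2 / k ^ 2)⁻¹ • Nmat l1 l2 k 0 :=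
  inv_eq_left_inv (inv_smul_Nmat_zero_mul_Mmat_zero h)

theorem isUnit_det_Mmat_zero : IsUnit (Mmat l1 l2 k 0).det :=
  isUnit_det_of_left_inverse (inv_smul_Nmat_zero_mul_Mmat_zero h)

theorem Mmat_zero_inv_mul_Nmat_zero :
    (Mmat l1 l2 k 0)⁻¹ * Nmat l1 l2 k 0 = (1 - l1 * l2 / k ^ 2)⁻¹ •
      !![1 + l1 * l2 / k ^ 2, 2 * I * l2 / k; -2 * I * l1 / k, 1 + l1 * l2 / k ^ 2] := by
  rw [inv_Mmat_zero h, smul_mul_assoc]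
  congr 1
  ext i j
  fin_cases i <;> fin_cases j <;>
    simp [Nmat, mul_apply, Fin.sum_univ_two] <;> ring_nf <;> simp only [I_sq] <;> ring

theorem det_Mmat_zero_inv_mul_Nmat_zero : ((Mmat l1 l2 k 0)⁻¹ * Nmat l1 l2 k 0).det = 1 := by
  rw [Mmat_zero_inv_mul_Nmat_zero h, det_smul, det_fin_two_of, Fintype.card_fin]
  field_simp
  linear_combination (4 * l1 * l2 / k ^ 2) * I_sq

theorem schwarzIteration_eq_diagonal_conj (δ : ℝ) :
    schwarzIteration l1 l2 k δ
      = diagonal ![exp (-l1 * δ), exp (-l2 * δ)] * ((Mmat l1 l2 k 0)⁻¹ * Nmat l1 l2 k 0)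
        * diagonal ![exp (-l1 * δ), exp (-l2 * δ)] * ((Mmat l1 l2 k 0)⁻¹ * Nmat l1 l2 k 0)⁻¹ := by
  rw [schwarzIteration, Mmat_eq_mul_diagonal _ _ _ δ, Nmat_eq_mul_diagonal _ _ _ δ,
    Matrix.mul_inv_rev, inv_diagonal_exp, Matrix.mul_inv_rev,
    nonsing_inv_nonsing_inv _ (isUnit_det_Mmat_zero h)]
  simp only [neg_mul, Matrix.mul_assoc]

theorem trace_schwarzIteration (δ : ℝ) :
    (schwarzIteration l1 l2 k δ).trace
      = ((1 + l1 * l2 / k ^ 2) / (1 - l1 * l2 / k ^ 2) * (exp (-l1 * δ) - exp (-l2 * δ))) ^ 2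
        + 2 * exp (-(δ : ℂ) * (l1 + l2)) := by
  have hG := det_Mmat_zero_inv_mul_Nmat_zero h
  rw [schwarzIteration_eq_diagonal_conj h,
    trace_diagonal_mul_mul_diagonal_mul_inv _ (by simp [hG]), hG, Mmat_zero_inv_mul_Nmat_zero h]
  simp only [Matrix.smul_apply, of_apply, cons_val_zero, cons_val_one, smul_eq_mul, div_one,
    ← exp_add]
  ring_nf

theorem det_schwarzIteration (δ : ℝ) :
    (schwarzIteration l1 l2 k δ).det = exp (-(δ : ℂ) * (l1 + l2)) ^ 2 := by
  rw [schwarzIteration_eq_diagonal_conj h,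
    det_diagonal_mul_mul_diagonal_mul_inv _ (by simp [det_Mmat_zero_inv_mul_Nmat_zero h]),
    ← exp_add]
  ring_nf

end Schwarz

theorem schwarz_iteration_matrix_eigenvalues_general
    (k : ℝ) (hk : k ≠ 0)
    (l1 l2 : ℂ)
    (hadmm : (k : ℂ) ^ 2 - l1 * l2 ≠ 0)
    (δ : ℝ)
    (X E rp rm : ℂ)
    (hX : X = ((k : ℂ) ^ 2 + l1 * l2) / ((k : ℂ) ^ 2 - l1 * l2)
              * (Complex.exp (-l1 * δ) - Complex.exp (-l2 * δ)))
    (hE : E = Complex.exp (-(δ : ℂ) * (l1 + l2)))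
    (hrp : rp = X ^ 2 / 2 + E + (X ^ 2 * (X ^ 2 + 4 * E)) ^ (1 / 2 : ℂ) / 2)
    (hrm : rm = X ^ 2 / 2 + E - (X ^ 2 * (X ^ 2 + 4 * E)) ^ (1 / 2 : ℂ) / 2) :
    spectrum ℂ ((Mmat l1 l2 k δ)⁻¹ * Nmat l1 l2 k δ * (Nmat l1 l2 k 0)⁻¹ * Mmat l1 l2 k 0)
        = {rp, rm}
      ∧ ((Mmat l1 l2 k δ)⁻¹ * Nmat l1 l2 k δ * (Nmat l1 l2 k 0)⁻¹ * Mmat l1 l2 k 0).charpoly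
        = (Polynomial.X - Polynomial.C rp) * (Polynomial.X - Polynomial.C rm) := by
  have hk' : (k : ℂ) ≠ 0 := ofReal_ne_zero.mpr hk
  have hratio : (1 + l1 * l2 / k ^ 2) / (1 - l1 * l2 / k ^ 2)
      = ((k : ℂ) ^ 2 + l1 * l2) / ((k : ℂ) ^ 2 - l1 * l2) := by
    field_simp
  have h : 1 - l1 * l2 / k ^ 2 ≠ 0 := by
    rw [one_sub_div (pow_ne_zero 2 hk')]
    exact div_ne_zero hadmm (pow_ne_zero 2 hk')
  have hsqrt : ((X ^ 2 * (X ^ 2 + 4 * E)) ^ (1 / 2 : ℂ)) ^ 2 = X ^ 2 * (X ^ 2 + 4 * E) := by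
    simp
  have htr : (schwarzIteration l1 l2 k δ).trace = rp + rm := by
    rw [trace_schwarzIteration h, hratio, hrp, hrm, ← hX, ← hE]
    ring
  have hdet : (schwarzIteration l1 l2 k δ).det = rp * rm := by
    rw [det_schwarzIteration h, hrp, hrm, ← hE]
    linear_combination (1 / 4 : ℂ) * hsqrt
  exact ⟨spectrum_fin_two_of_trace_of_det htr hdet, charpoly_fin_two_of_trace_of_det htr hdet⟩

/-- the eigenvalues of the Schwarz iteration matrix `R_δ = M_δ⁻¹ N_δ N_0⁻¹ M_0`
are exactly `r± = X²/2 + e^{−δ(λ₁+λ₂)} ± (1/2)√(X²(X² + 4e^{−δ(λ₁+λ₂)}))`, i.e. `r₊, r₋`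
are the roots of the characteristic polynomial of `R_δ`. -/
theorem schwarz_iteration_matrix_eigenvalues
    (μ lam ρ ω : ℝ) (hμ : 0 < μ) (hlam : 0 < lam) (hρ : 0 < ρ) (hω : 0 < ω)
    (Cp Cs : ℝ) (hCp : Cp = Real.sqrt ((lam + 2 * μ) / ρ)) (hCs : Cs = Real.sqrt (μ / ρ))
    (k : ℝ) (hk : k ≠ 0)
    (l1 l2 : ℂ)
    (hl1 : l1 = ((k ^ 2 - ω ^ 2 / Cs ^ 2 : ℝ) : ℂ) ^ (1 / 2 : ℂ))
    (hl2 : l2 = ((k ^ 2 - ω ^ 2 / Cp ^ 2 : ℝ) : ℂ) ^ (1 / 2 : ℂ))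
    (hadmp : (k : ℂ) ^ 2 + l1 * l2 ≠ 0) (hadmm : (k : ℂ) ^ 2 - l1 * l2 ≠ 0)
    (δ : ℝ) (hδ : 0 ≤ δ)
    (X E rp rm : ℂ)
    (hX : X = ((k : ℂ) ^ 2 + l1 * l2) / ((k : ℂ) ^ 2 - l1 * l2)
              * (Complex.exp (-l1 * δ) - Complex.exp (-l2 * δ)))
    (hE : E = Complex.exp (-(δ : ℂ) * (l1 + l2)))
    (hrp : rp = X ^ 2 / 2 + E + (X ^ 2 * (X ^ 2 + 4 * E)) ^ (1 / 2 : ℂ) / 2)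
    (hrm : rm = X ^ 2 / 2 + E - (X ^ 2 * (X ^ 2 + 4 * E)) ^ (1 / 2 : ℂ) / 2) :
    spectrum ℂ ((Mmat l1 l2 k δ)⁻¹ * Nmat l1 l2 k δ * (Nmat l1 l2 k 0)⁻¹ * Mmat l1 l2 k 0)
        = {rp, rm}
      ∧ ((Mmat l1 l2 k δ)⁻¹ * Nmat l1 l2 k δ * (Nmat l1 l2 k 0)⁻¹ * Mmat l1 l2 k 0).charpoly
        = (Polynomial.X - Polynomial.C rp) * (Polynomial.X - Polynomial.C rm) :=
  schwarz_iteration_matrix_eigenvalues_general k hk l1 l2 hadmm δ X E rp rm hX hE hrp hrm
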